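/- arXiv:1704.00378 — 9 statements merged into one kernel-verified Lean document; each statement's English description precedes it below -/
import Mathlib

section
/- Let (φ_n)_{n≥1} be a sequence of real numbers with liminf_{n→∞} φ_n ≥ 0. Suppose there exists a real sequence (ε_n)_{n≥1} with lim_{n→∞} ε_n = 0 such that φ_{n+1} − φ_n ≤ −φ_n/(n+1) + ε_n/n for every n ≥ 1. Then lim_{n→∞} φ_n = 0. -/
open Filter Finset

theorem fictitious_play_phi_lemma (φ ε : ℕ → ℝ)
    (hliminf : 0 ≤ Filter.liminf (fun n => (φ n : EReal)) Filter.atTop)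
    (hε : Filter.Tendsto ε Filter.atTop (nhds 0))
    (hineq : ∀ n : ℕ, 1 ≤ n →
      φ (n + 1) - φ n ≤ -φ n / (n + 1) + ε n / n) :
    Filter.Tendsto φ Filter.atTop (nhds 0) := by
  set δ : ℕ → ℝ := fun k => if k = 0 then 0 else ε k + ε k / k with hδdef
  have hinv : Tendsto (fun k : ℕ => (k : ℝ)⁻¹) atTop (nhds 0) :=
    tendsto_inv_atTop_nhds_zero_nat
  have hδ0 : Tendsto δ atTop (nhds 0) := by
    have h1 : Tendsto (fun k : ℕ => ε k + ε k / k) atTop (nhds 0) := by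
      have := hε.add (hε.mul hinv)
      simpa [div_eq_mul_inv] using this
    refine Tendsto.congr' ?_ h1
    filter_upwards [eventually_ge_atTop 1] with k hk
    simp [hδdef, Nat.one_le_iff_ne_zero.mp hk]
  have key : ∀ n : ℕ, 1 ≤ n → (n : ℝ) * φ n ≤ φ 1 + ∑ k ∈ range n, δ k := by
    intro n hn
    induction n with
    | zero => omega
    | succ m ih =>
      rcases Nat.lt_or_ge m 1 with h1 | h1
      · obtain rfl : m = 0 := by omega
        simp [hδdef]
      · have h2 := hineq m h1
        have hmpos : (0 : ℝ) < m := by exact_mod_cast h1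
        have hδm : δ m = ε m + ε m / m := by
          simp [hδdef, Nat.one_le_iff_ne_zero.mp h1]
        have step : ((m : ℝ) + 1) * φ (m + 1) ≤ (m : ℝ) * φ m + δ m := by
          have key1 : ((m : ℝ) + 1) * (φ (m + 1) - φ m)
              ≤ ((m : ℝ) + 1) * (-φ m / ((m : ℕ) + 1) + ε m / m) :=
            mul_le_mul_of_nonneg_left h2 (by positivity)
          have key2 : ((m : ℝ) + 1) * (-φ m / ((m : ℕ) + 1) + ε m / m)
              = -φ m + (ε m + ε m / m) := by
            field_simp
          rw [key2] at key1
          rw [hδm]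
          linarith
        have ihm := ih h1
        have : ((m + 1 : ℕ) : ℝ) * φ (m + 1) ≤ φ 1 + (∑ k ∈ range m, δ k + δ m) := by
          push_cast
          linarith
        simpa [Finset.sum_range_succ] using this
  have hsum : Tendsto (fun n : ℕ => (φ 1 + ∑ k ∈ range n, δ k) / n) atTop (nhds 0) := by
    have hc := hδ0.cesaro
    have h1 : Tendsto (fun n : ℕ => φ 1 * (n : ℝ)⁻¹) atTop (nhds 0) := by
      simpa using (tendsto_const_nhds (x := φ 1)).mul hinv
    have h2 := h1.add hc
    rw [add_zero] at h2
    refine h2.congr fun n => ?_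
    rw [div_eq_mul_inv]
    ring
  rw [NormedAddCommGroup.tendsto_nhds_zero]
  intro η hη
  have hup : ∀ᶠ n in atTop, φ n < η := by
    have h2 : ∀ᶠ n in atTop, (φ 1 + ∑ k ∈ range n, δ k) / n < η :=
      hsum.eventually (eventually_lt_nhds hη)
    filter_upwards [h2, eventually_ge_atTop 1] with n hn hn1
    have hnpos : (0 : ℝ) < n := by exact_mod_cast hn1
    have := key n hn1
    calc φ n = (n : ℝ) * φ n / n := by field_simp
    _ ≤ (φ 1 + ∑ k ∈ range n, δ k) / n := by gcongr
    _ < η := hn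
  have hlow : ∀ᶠ n in atTop, -η < φ n := by
    have h3 : ((-η : ℝ) : EReal) < liminf (fun n => (φ n : EReal)) atTop := by
      refine lt_of_lt_of_le ?_ hliminf
      exact_mod_cast neg_lt_zero.mpr hη
    filter_upwards [eventually_lt_of_lt_liminf h3] with n hn
    exact_mod_cast hn
  filter_upwards [hup, hlow] with n h1 h2
  rw [Real.norm_eq_abs, abs_lt]
  exact ⟨h2, h1⟩
end

section
/- Let (a_n)_{n≥1} be a sequence of nonnegative real numbers such that ∑_{n=1}^∞ a_n/n < ∞, and suppose there is a constant C > 0 with |a_n − a_{n+1}| < C/n for every n ≥ 1. Then lim_{n→∞} a_n = 0. -/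
open Filter

theorem tendsto_zero_of_summable_div_and_slow_variation (a : ℕ → ℝ) (C : ℝ)
    (hC : 0 < C)
    (ha : ∀ n : ℕ, 1 ≤ n → 0 ≤ a n)
    (hsum : Summable (fun n : ℕ => a n / n))
    (hdiff : ∀ n : ℕ, 1 ≤ n → |a n - a (n + 1)| < C / n) :
    Filter.Tendsto a Filter.atTop (nhds 0) := by
  rw [Metric.tendsto_atTop]
  intro ε hε
  by_contra hcon
  push_neg at hcon
  set f : ℕ → ℝ := fun n => a n / n with hfdef
  -- step-down lemma
  have step : ∀ n : ℕ, 1 ≤ n → ∀ j : ℕ, a n - j * (C / n) ≤ a (n + j) := by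
    intro n hn j
    have hnpos : (0:ℝ) < n := by exact_mod_cast hn
    induction j with
    | zero => simp
    | succ j ih =>
      have hd := hdiff (n + j) (le_trans hn (Nat.le_add_right n j))
      have habs := (abs_lt.mp hd).2
      have h2 : C / ((n:ℝ) + j) ≤ C / n := by
        gcongr
        linarith [Nat.cast_nonneg (α := ℝ) j]
      have hcc : ((n + j : ℕ) : ℝ) = (n:ℝ) + j := by push_cast; ring
      rw [hcc] at habs
      have hcast : ((j + 1 : ℕ) : ℝ) = (j:ℝ) + 1 := by push_cast; ring
      have hadd : n + (j + 1) = n + j + 1 := rfl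
      rw [hadd, hcast]
      linarith
  -- positive constant
  set c : ℝ := (ε / 2) * (ε / (2 * C + ε)) with hcdef
  have hc : 0 < c := by
    apply mul_pos (by linarith)
    apply div_pos hε (by linarith)
  -- partial sums are Cauchy
  set S : ℕ → ℝ := fun N => ∑ i ∈ Finset.range N, f i with hSdef
  have hS : Filter.Tendsto S atTop (nhds (∑' i, f i)) := hsum.hasSum.tendsto_sum_nat
  have hcau := hS.cauchySeq
  rw [Metric.cauchySeq_iff] at hcau
  obtain ⟨N, hN⟩ := hcau c hc
  obtain ⟨n, hn1, hn2⟩ := hcon (max N 1)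
  have hnN : N ≤ n := le_trans (le_max_left _ _) hn1
  have hn1' : 1 ≤ n := le_trans (le_max_right _ _) hn1
  have hnpos : (0:ℝ) < n := by exact_mod_cast hn1'
  have hεn : ε ≤ a n := by
    rw [Real.dist_eq, sub_zero, abs_of_nonneg (ha n hn1')] at hn2
    exact hn2
  set k : ℕ := ⌊ε * n / (2 * C)⌋₊ with hkdef
  have hk_le : (k:ℝ) ≤ ε * n / (2 * C) :=
    Nat.floor_le (by positivity)
  have hk_lt : ε * n / (2 * C) < (k:ℝ) + 1 := Nat.lt_floor_add_one _
  have hkC : (k:ℝ) * (2 * C) ≤ ε * n := by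
    rw [← le_div_iff₀ (by linarith : (0:ℝ) < 2 * C)]
    exact hk_le
  -- on the block, a stays ≥ ε/2
  have hblockterm : ∀ j : ℕ, j ≤ k → ε / 2 ≤ a (n + j) := by
    intro j hj
    have h1 := step n hn1' j
    have hkc : (k:ℝ) * (C / n) ≤ ε / 2 := by
      rw [mul_div_assoc', div_le_div_iff₀ hnpos (by norm_num : (0:ℝ) < 2)]
      nlinarith
    have hjk : (j:ℝ) * (C / n) ≤ (k:ℝ) * (C / n) := by
      apply mul_le_mul_of_nonneg_right _ (by positivity)
      exact_mod_cast hj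
    linarith
  -- block sum lower bound
  have hsum_lb : (((k:ℝ) + 1) * ((ε / 2) / ((n:ℝ) + k))) ≤
      ∑ j ∈ Finset.range (k + 1), f (n + j) := by
    have hterms : ∀ j ∈ Finset.range (k + 1), (ε / 2) / ((n:ℝ) + k) ≤ f (n + j) := by
      intro j hj
      rw [Finset.mem_range, Nat.lt_succ_iff] at hj
      have hterm := hblockterm j hj
      have hnj : (0:ℝ) < (n:ℝ) + j := by
        have : (0:ℝ) ≤ (j:ℝ) := Nat.cast_nonneg j
        linarith
      have hle : (n:ℝ) + j ≤ (n:ℝ) + k := by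
        have : (j:ℝ) ≤ (k:ℝ) := by exact_mod_cast hj
        linarith
      have hfj : f (n + j) = a (n + j) / ((n:ℝ) + j) := by
        simp only [hfdef]
        push_cast
        ring
      rw [hfj]
      have hA : (ε / 2) / ((n:ℝ) + k) ≤ (ε / 2) / ((n:ℝ) + j) := by
        gcongr <;> linarith
      have hB : (ε / 2) / ((n:ℝ) + j) ≤ a (n + j) / ((n:ℝ) + j) := by
        gcongr
      linarith
    calc ((k:ℝ) + 1) * ((ε / 2) / ((n:ℝ) + k))
        = ∑ _j ∈ Finset.range (k + 1), (ε / 2) / ((n:ℝ) + k) := by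
          rw [Finset.sum_const, Finset.card_range, nsmul_eq_mul]
          push_cast
          try ring
      _ ≤ ∑ j ∈ Finset.range (k + 1), f (n + j) := Finset.sum_le_sum hterms
  -- the key constant bound
  have hkey : c < ((k:ℝ) + 1) * ((ε / 2) / ((n:ℝ) + k)) := by
    have hnk : (0:ℝ) < (n:ℝ) + k := by positivity
    have h1 : ε * n < 2 * C * ((k:ℝ) + 1) := by
      rw [div_lt_iff₀ (by linarith : (0:ℝ) < 2 * C)] at hk_lt
      linarith
    have h2 : ε * ((n:ℝ) + k) < (2 * C + ε) * ((k:ℝ) + 1) := by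
      nlinarith [Nat.cast_nonneg (α := ℝ) k]
    have hne1 : (2 * C + ε) ≠ 0 := by positivity
    have hne2 : ((n:ℝ) + k) ≠ 0 := ne_of_gt hnk
    have e1 : c = (ε * ε) / (2 * (2 * C + ε)) := by
      rw [hcdef]; field_simp
      try ring
    have e2 : ((k:ℝ) + 1) * ((ε / 2) / ((n:ℝ) + k))
        = (((k:ℝ) + 1) * ε) / (2 * ((n:ℝ) + k)) := by
      field_simp
      try ring
    rw [e1, e2, div_lt_div_iff₀ (by linarith : (0:ℝ) < 2 * (2 * C + ε))
      (by linarith : (0:ℝ) < 2 * ((n:ℝ) + k))]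
    nlinarith [mul_lt_mul_of_pos_left h2 hε]
  -- relate block sum to partial sums
  have hblock_eq : ∑ j ∈ Finset.range (k + 1), f (n + j) = S (n + k + 1) - S n := by
    have h1 : S (n + k + 1) - S n = ∑ i ∈ Finset.Ico n (n + k + 1), f i := by
      rw [hSdef]
      exact (Finset.sum_Ico_eq_sub f (by omega)).symm
    have hidx : n + k + 1 - n = k + 1 := by omega
    rw [h1, Finset.sum_Ico_eq_sum_range, hidx]
  -- contradiction with Cauchy
  have hdist := hN (n + k + 1) (hnN.trans (by omega)) n hnN
  rw [Real.dist_eq] at hdist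
  have h3 : c < S (n + k + 1) - S n := by
    rw [← hblock_eq]
    linarith
  linarith [le_abs_self (S (n + k + 1) - S n)]
end

section
/- Consider an anonymous game G = (I, λ, V, (A_i)_{i∈I}, J). Let S denote the set of action distributions Ψ♯λ of admissible profiles Ψ, and assume that for every η ∈ S the map a ↦ J(a,η) is Borel measurable. Suppose J is monotone on S and satisfies the unique minimiser condition on S. If Ψ₁ and Ψ₂ are two Nash equilibria of G, then Ψ₁(i) = Ψ₂(i) for λ-almost every i ∈ I. -/
open MeasureTheory

/-- In an anonymous game with monotone cost satisfying the unique minimiser condition,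
any two Nash equilibria coincide almost everywhere. -/
theorem nash_equilibrium_unique
    {I V : Type*} [MeasurableSpace I] [MetricSpace V] [MeasurableSpace V] [BorelSpace V]
    (lam : Measure I) [IsProbabilityMeasure lam]
    (A : I → Set V) (hA : ∀ i, (A i).Nonempty)
    (J : V → Measure V → ℝ)
    -- the set of action distributions of admissible profiles
    (S : Set (Measure V))
    (hS : S = {η | ∃ Ψ : I → V, Measurable Ψ ∧ (∀ᵐ i ∂lam, Ψ i ∈ A i) ∧
      η = Measure.map Ψ lam})
    -- measurability of the cost
    (hJmeas : ∀ η ∈ S, Measurable (fun a => J a η))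
    -- monotonicity of the cost on S (including the integrability requirements)
    (hmono : ∀ η ∈ S, ∀ η' ∈ S,
      Integrable (fun a => J a η) η ∧ Integrable (fun a => J a η) η' ∧
      Integrable (fun a => J a η') η ∧ Integrable (fun a => J a η') η' ∧
      0 ≤ (∫ a, J a η ∂η - ∫ a, J a η ∂η') - (∫ a, J a η' ∂η - ∫ a, J a η' ∂η'))
    -- unique minimiser condition on S
    (huniq : ∀ η ∈ S, ∀ᵐ i ∂lam,
      ∃! a : V, a ∈ A i ∧ ∀ b ∈ A i, J a η ≤ J b η)
    -- Ψ₁, Ψ₂ are Nash equilibria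
    (Ψ₁ Ψ₂ : I → V)
    (hΨ₁meas : Measurable Ψ₁) (hΨ₂meas : Measurable Ψ₂)
    (hΨ₁ : ∀ᵐ i ∂lam, Ψ₁ i ∈ A i ∧
      ∀ b ∈ A i, J (Ψ₁ i) (Measure.map Ψ₁ lam) ≤ J b (Measure.map Ψ₁ lam))
    (hΨ₂ : ∀ᵐ i ∂lam, Ψ₂ i ∈ A i ∧
      ∀ b ∈ A i, J (Ψ₂ i) (Measure.map Ψ₂ lam) ≤ J b (Measure.map Ψ₂ lam)) :
    Ψ₁ =ᵐ[lam] Ψ₂ := by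
  set η₁ := Measure.map Ψ₁ lam with hη₁def
  set η₂ := Measure.map Ψ₂ lam with hη₂def
  have hη₁S : η₁ ∈ S := by
    rw [hS]; exact ⟨Ψ₁, hΨ₁meas, hΨ₁.mono fun i h => h.1, rfl⟩
  have hη₂S : η₂ ∈ S := by
    rw [hS]; exact ⟨Ψ₂, hΨ₂meas, hΨ₂.mono fun i h => h.1, rfl⟩
  obtain ⟨h11, h12, h21, h22, hpos⟩ := hmono η₁ hη₁S η₂ hη₂S
  -- rewrite integrals over pushforwards as integrals over lam
  have hm1 : Measurable (fun a => J a η₁) := hJmeas η₁ hη₁S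
  have hm2 : Measurable (fun a => J a η₂) := hJmeas η₂ hη₂S
  have e11 : ∫ a, J a η₁ ∂η₁ = ∫ i, J (Ψ₁ i) η₁ ∂lam :=
    integral_map hΨ₁meas.aemeasurable hm1.aestronglyMeasurable
  have e12 : ∫ a, J a η₁ ∂η₂ = ∫ i, J (Ψ₂ i) η₁ ∂lam :=
    integral_map hΨ₂meas.aemeasurable hm1.aestronglyMeasurable
  have e21 : ∫ a, J a η₂ ∂η₁ = ∫ i, J (Ψ₁ i) η₂ ∂lam :=
    integral_map hΨ₁meas.aemeasurable hm2.aestronglyMeasurable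
  have e22 : ∫ a, J a η₂ ∂η₂ = ∫ i, J (Ψ₂ i) η₂ ∂lam :=
    integral_map hΨ₂meas.aemeasurable hm2.aestronglyMeasurable
  -- integrability of compositions
  have i11 : Integrable (fun i => J (Ψ₁ i) η₁) lam :=
    (integrable_map_measure hm1.aestronglyMeasurable hΨ₁meas.aemeasurable).mp h11
  have i12 : Integrable (fun i => J (Ψ₂ i) η₁) lam :=
    (integrable_map_measure hm1.aestronglyMeasurable hΨ₂meas.aemeasurable).mp h12
  have i21 : Integrable (fun i => J (Ψ₁ i) η₂) lam :=
    (integrable_map_measure hm2.aestronglyMeasurable hΨ₁meas.aemeasurable).mp h21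
  have i22 : Integrable (fun i => J (Ψ₂ i) η₂) lam :=
    (integrable_map_measure hm2.aestronglyMeasurable hΨ₂meas.aemeasurable).mp h22
  -- pointwise a.e. inequalities from Nash property
  have hle1 : ∀ᵐ i ∂lam, J (Ψ₁ i) η₁ ≤ J (Ψ₂ i) η₁ := by
    filter_upwards [hΨ₁, hΨ₂] with i h1 h2
    exact h1.2 _ h2.1
  have hle2 : ∀ᵐ i ∂lam, J (Ψ₂ i) η₂ ≤ J (Ψ₁ i) η₂ := by
    filter_upwards [hΨ₁, hΨ₂] with i h1 h2
    exact h2.2 _ h1.1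
  have hint1 : ∫ i, J (Ψ₁ i) η₁ ∂lam ≤ ∫ i, J (Ψ₂ i) η₁ ∂lam :=
    integral_mono_ae i11 i12 hle1
  have hint2 : ∫ i, J (Ψ₂ i) η₂ ∂lam ≤ ∫ i, J (Ψ₁ i) η₂ ∂lam :=
    integral_mono_ae i22 i21 hle2
  -- conclude equality of integrals for η₁
  have heq : ∫ i, J (Ψ₁ i) η₁ ∂lam = ∫ i, J (Ψ₂ i) η₁ ∂lam := by
    rw [e11, e12, e21, e22] at hpos
    linarith
  have haeeq : (fun i => J (Ψ₁ i) η₁) =ᵐ[lam] fun i => J (Ψ₂ i) η₁ :=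
    (integral_eq_iff_of_ae_le i11 i12 hle1).mp heq
  -- unique minimiser gives a.e. equality of profiles
  filter_upwards [hΨ₁, hΨ₂, haeeq, huniq η₁ hη₁S] with i h1 h2 heqi hu
  obtain ⟨a, _, hau⟩ := hu
  have hΨ₂min : ∀ b ∈ A i, J (Ψ₂ i) η₁ ≤ J b η₁ := fun b hb => by
    rw [← heqi]; exact h1.2 b hb
  rw [hau _ ⟨h1.1, h1.2⟩, hau _ ⟨h2.1, hΨ₂min⟩]
end

section
/- Consider an anonymous game G = (I, λ, V, (A_i)_{i∈I}, J). Let S denote the set of action distributions Ψ♯λ of admissible profiles Ψ, and assume that for every η ∈ S the map a ↦ J(a,η) is Borel measurable. Suppose J is strictly monotone on S. If Ψ₁ and Ψ₂ are two Nash equilibria of G, then their action distributions coincide: Ψ₁♯λ = Ψ₂♯λ. -/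
open MeasureTheory

/-- In an anonymous game with strictly monotone cost, any two Nash equilibria have the
same action distribution. -/
theorem nash_equilibrium_distribution_unique_of_strict_monotone
    {I V : Type*} [MeasurableSpace I] [MetricSpace V] [MeasurableSpace V] [BorelSpace V]
    (lam : Measure I) [IsProbabilityMeasure lam]
    (A : I → Set V) (hA : ∀ i, (A i).Nonempty)
    (J : V → Measure V → ℝ)
    -- the set of action distributions of admissible profiles
    (S : Set (Measure V))
    (hS : S = {η | ∃ Ψ : I → V, Measurable Ψ ∧ (∀ᵐ i ∂lam, Ψ i ∈ A i) ∧
      η = Measure.map Ψ lam})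
    -- measurability of the cost
    (hJmeas : ∀ η ∈ S, Measurable (fun a => J a η))
    -- strict monotonicity of the cost on S (including the integrability requirements)
    (hmono : ∀ η ∈ S, ∀ η' ∈ S,
      Integrable (fun a => J a η) η ∧ Integrable (fun a => J a η) η' ∧
      Integrable (fun a => J a η') η ∧ Integrable (fun a => J a η') η' ∧
      0 ≤ (∫ a, J a η ∂η - ∫ a, J a η ∂η') - (∫ a, J a η' ∂η - ∫ a, J a η' ∂η') ∧
      (η ≠ η' →
        0 < (∫ a, J a η ∂η - ∫ a, J a η ∂η') - (∫ a, J a η' ∂η - ∫ a, J a η' ∂η')))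
    -- Ψ₁, Ψ₂ are Nash equilibria
    (Ψ₁ Ψ₂ : I → V)
    (hΨ₁meas : Measurable Ψ₁) (hΨ₂meas : Measurable Ψ₂)
    (hΨ₁ : ∀ᵐ i ∂lam, Ψ₁ i ∈ A i ∧
      ∀ b ∈ A i, J (Ψ₁ i) (Measure.map Ψ₁ lam) ≤ J b (Measure.map Ψ₁ lam))
    (hΨ₂ : ∀ᵐ i ∂lam, Ψ₂ i ∈ A i ∧
      ∀ b ∈ A i, J (Ψ₂ i) (Measure.map Ψ₂ lam) ≤ J b (Measure.map Ψ₂ lam)) :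
    Measure.map Ψ₁ lam = Measure.map Ψ₂ lam := by
  by_contra hne
  set η₁ := Measure.map Ψ₁ lam with hη₁
  set η₂ := Measure.map Ψ₂ lam with hη₂
  have hS₁ : η₁ ∈ S := by rw [hS]; exact ⟨Ψ₁, hΨ₁meas, hΨ₁.mono fun i h => h.1, rfl⟩
  have hS₂ : η₂ ∈ S := by rw [hS]; exact ⟨Ψ₂, hΨ₂meas, hΨ₂.mono fun i h => h.1, rfl⟩
  obtain ⟨i11, i12, i21, i22, _, hstrict⟩ := hmono η₁ hS₁ η₂ hS₂
  have hm1 := hJmeas η₁ hS₁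
  have hm2 := hJmeas η₂ hS₂
  -- pointwise inequalities
  have hpt : ∀ᵐ i ∂lam, J (Ψ₁ i) η₁ ≤ J (Ψ₂ i) η₁ ∧ J (Ψ₂ i) η₂ ≤ J (Ψ₁ i) η₂ := by
    filter_upwards [hΨ₁, hΨ₂] with i h1 h2
    exact ⟨h1.2 _ h2.1, h2.2 _ h1.1⟩
  -- integrability over lam
  have int11 : Integrable (fun i => J (Ψ₁ i) η₁) lam :=
    (integrable_map_measure hm1.aestronglyMeasurable hΨ₁meas.aemeasurable).mp i11
  have int21 : Integrable (fun i => J (Ψ₂ i) η₁) lam :=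
    (integrable_map_measure hm1.aestronglyMeasurable hΨ₂meas.aemeasurable).mp i12
  have int12 : Integrable (fun i => J (Ψ₁ i) η₂) lam :=
    (integrable_map_measure hm2.aestronglyMeasurable hΨ₁meas.aemeasurable).mp i21
  have int22 : Integrable (fun i => J (Ψ₂ i) η₂) lam :=
    (integrable_map_measure hm2.aestronglyMeasurable hΨ₂meas.aemeasurable).mp i22
  have I1 : ∫ i, J (Ψ₁ i) η₁ ∂lam ≤ ∫ i, J (Ψ₂ i) η₁ ∂lam :=
    integral_mono_ae int11 int21 (hpt.mono fun i h => h.1)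
  have I2 : ∫ i, J (Ψ₂ i) η₂ ∂lam ≤ ∫ i, J (Ψ₁ i) η₂ ∂lam :=
    integral_mono_ae int22 int12 (hpt.mono fun i h => h.2)
  have e11 : ∫ a, J a η₁ ∂η₁ = ∫ i, J (Ψ₁ i) η₁ ∂lam :=
    integral_map hΨ₁meas.aemeasurable hm1.aestronglyMeasurable
  have e21 : ∫ a, J a η₁ ∂η₂ = ∫ i, J (Ψ₂ i) η₁ ∂lam :=
    integral_map hΨ₂meas.aemeasurable hm1.aestronglyMeasurable
  have e12 : ∫ a, J a η₂ ∂η₁ = ∫ i, J (Ψ₁ i) η₂ ∂lam :=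
    integral_map hΨ₁meas.aemeasurable hm2.aestronglyMeasurable
  have e22 : ∫ a, J a η₂ ∂η₂ = ∫ i, J (Ψ₂ i) η₂ ∂lam :=
    integral_map hΨ₂meas.aemeasurable hm2.aestronglyMeasurable
  have := hstrict hne
  rw [e11, e21, e12, e22] at this
  linarith
end

section
/- Consider an anonymous game G = (I, λ, V, (A_i)_{i∈I}, J) and let S denote the set of action distributions of admissible profiles; assume that for every η ∈ S the map a ↦ J(a,η) is Borel measurable. Suppose J is monotone on S and let Ψ̃ be a Nash equilibrium with action distribution η̃ = Ψ̃♯λ. Then for every admissible profile Ψ with action distribution η = Ψ♯λ one has ∫ J(a,η) d(η − η̃)(a) ≥ ∫ J(a,η̃) d(η − η̃)(a) ≥ 0, where ∫ φ d(η − η̃) denotes ∫ φ dη − ∫ φ dη̃. -/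
/-!
The first inequality is monotonicity of `J` at the pair `(η, η̃)`, rearranged. The second is
the equilibrium condition `J(Ψ̃ i, η̃) ≤ J(Ψ i, η̃)`, valid for almost every player, integrated
over the players: both sides become integrals against the pushforwards `η̃` and `η`.
-/

open MeasureTheory

theorem MeasureTheory.integral_map_mono_ae {α β : Type*} [MeasurableSpace α] [MeasurableSpace β]
    {μ : Measure α} {f : β → ℝ} {Φ Ψ : α → β} (hΦ : AEMeasurable Φ μ) (hΨ : AEMeasurable Ψ μ)
    (hfΦ : Integrable f (μ.map Φ)) (hfΨ : Integrable f (μ.map Ψ))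
    (hle : ∀ᵐ a ∂μ, f (Φ a) ≤ f (Ψ a)) :
    ∫ b, f b ∂μ.map Φ ≤ ∫ b, f b ∂μ.map Ψ := by
  rw [integral_map hΦ hfΦ.aestronglyMeasurable, integral_map hΨ hfΨ.aestronglyMeasurable]
  exact integral_mono_ae (hfΦ.comp_aemeasurable hΦ) (hfΨ.comp_aemeasurable hΨ) hle

theorem integral_cost_equilibrium_le {I V : Type*} [MeasurableSpace I] [MeasurableSpace V]
    {lam : Measure I} {A : I → Set V} {J : V → Measure V → ℝ} {Ψt Ψ : I → V}
    (hΨtmeas : Measurable Ψt) (hΨmeas : Measurable Ψ)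
    (hΨt : ∀ᵐ i ∂lam, Ψt i ∈ A i ∧
      ∀ b ∈ A i, J (Ψt i) (Measure.map Ψt lam) ≤ J b (Measure.map Ψt lam))
    (hΨ : ∀ᵐ i ∂lam, Ψ i ∈ A i)
    (hint : Integrable (fun a => J a (lam.map Ψt)) (lam.map Ψt))
    (hint' : Integrable (fun a => J a (lam.map Ψt)) (lam.map Ψ)) :
    ∫ a, J a (lam.map Ψt) ∂lam.map Ψt ≤ ∫ a, J a (lam.map Ψt) ∂lam.map Ψ :=
  integral_map_mono_ae hΨtmeas.aemeasurable hΨmeas.aemeasurable hint hint' <| by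
    filter_upwards [hΨt, hΨ] with i hNash hadm using hNash.2 (Ψ i) hadm

theorem monotone_nash_variational_inequality_general
    {I V : Type*} [MeasurableSpace I] [MeasurableSpace V]
    (lam : Measure I)
    (A : I → Set V)
    (J : V → Measure V → ℝ)
    -- the set of action distributions of admissible profiles
    (S : Set (Measure V))
    (hS : S = {θ | ∃ Ψ : I → V, Measurable Ψ ∧ (∀ᵐ i ∂lam, Ψ i ∈ A i) ∧
      θ = Measure.map Ψ lam})
    -- monotonicity of the cost on S (including the integrability requirements)
    (hmono : ∀ θ ∈ S, ∀ θ' ∈ S,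
      Integrable (fun a => J a θ) θ ∧ Integrable (fun a => J a θ) θ' ∧
      Integrable (fun a => J a θ') θ ∧ Integrable (fun a => J a θ') θ' ∧
      0 ≤ (∫ a, J a θ ∂θ - ∫ a, J a θ ∂θ') - (∫ a, J a θ' ∂θ - ∫ a, J a θ' ∂θ'))
    -- Ψ̃ is a Nash equilibrium with distribution ηt
    (Ψt : I → V) (hΨtmeas : Measurable Ψt)
    (hΨt : ∀ᵐ i ∂lam, Ψt i ∈ A i ∧
      ∀ b ∈ A i, J (Ψt i) (Measure.map Ψt lam) ≤ J b (Measure.map Ψt lam))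
    -- Ψ is any admissible profile with distribution η
    (Ψ : I → V) (hΨmeas : Measurable Ψ) (hΨ : ∀ᵐ i ∂lam, Ψ i ∈ A i)
    (η ηt : Measure V) (hη : η = Measure.map Ψ lam) (hηt : ηt = Measure.map Ψt lam) :
    (∫ a, J a η ∂η - ∫ a, J a η ∂ηt ≥ ∫ a, J a ηt ∂η - ∫ a, J a ηt ∂ηt) ∧
      (∫ a, J a ηt ∂η - ∫ a, J a ηt ∂ηt ≥ 0) := by
  subst hη hηt
  have hηS : lam.map Ψ ∈ S := hS ▸ ⟨Ψ, hΨmeas, hΨ, rfl⟩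
  have hηtS : lam.map Ψt ∈ S := hS ▸ ⟨Ψt, hΨtmeas, hΨt.mono fun _ h => h.1, rfl⟩
  obtain ⟨-, -, hint', hint, hmono⟩ := hmono _ hηS _ hηtS
  have hNash := integral_cost_equilibrium_le hΨtmeas hΨmeas hΨt hΨ hint hint'
  exact ⟨by linarith, by linarith⟩

/-- Remark: in a monotone anonymous game, if `Ψ̃` is a Nash equilibrium with distribution
`ηt` and `Ψ` is any admissible profile with distribution `η`, then
`∫ J(a,η) d(η − ηt) ≥ ∫ J(a,ηt) d(η − ηt) ≥ 0`. -/
theorem monotone_nash_variational_inequality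
    {I V : Type*} [MeasurableSpace I] [MetricSpace V] [MeasurableSpace V] [BorelSpace V]
    (lam : Measure I) [IsProbabilityMeasure lam]
    (A : I → Set V) (hA : ∀ i, (A i).Nonempty)
    (J : V → Measure V → ℝ)
    -- the set of action distributions of admissible profiles
    (S : Set (Measure V))
    (hS : S = {θ | ∃ Ψ : I → V, Measurable Ψ ∧ (∀ᵐ i ∂lam, Ψ i ∈ A i) ∧
      θ = Measure.map Ψ lam})
    -- measurability of the cost
    (hJmeas : ∀ θ ∈ S, Measurable (fun a => J a θ))
    -- monotonicity of the cost on S (including the integrability requirements)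
    (hmono : ∀ θ ∈ S, ∀ θ' ∈ S,
      Integrable (fun a => J a θ) θ ∧ Integrable (fun a => J a θ) θ' ∧
      Integrable (fun a => J a θ') θ ∧ Integrable (fun a => J a θ') θ' ∧
      0 ≤ (∫ a, J a θ ∂θ - ∫ a, J a θ ∂θ') - (∫ a, J a θ' ∂θ - ∫ a, J a θ' ∂θ'))
    -- Ψ̃ is a Nash equilibrium with distribution ηt
    (Ψt : I → V) (hΨtmeas : Measurable Ψt)
    (hΨt : ∀ᵐ i ∂lam, Ψt i ∈ A i ∧
      ∀ b ∈ A i, J (Ψt i) (Measure.map Ψt lam) ≤ J b (Measure.map Ψt lam))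
    -- Ψ is any admissible profile with distribution η
    (Ψ : I → V) (hΨmeas : Measurable Ψ) (hΨ : ∀ᵐ i ∂lam, Ψ i ∈ A i)
    (η ηt : Measure V) (hη : η = Measure.map Ψ lam) (hηt : ηt = Measure.map Ψt lam) :
    (∫ a, J a η ∂η - ∫ a, J a η ∂ηt ≥ ∫ a, J a ηt ∂η - ∫ a, J a ηt ∂ηt) ∧
      (∫ a, J a ηt ∂η - ∫ a, J a ηt ∂ηt ≥ 0) :=
  monotone_nash_variational_inequality_general lam A J S hS hmono Ψt hΨtmeas hΨt Ψ hΨmeas hΨ η ηt hη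
    hηt
end

section
/- Consider an anonymous game G = (I, λ, V, (A_i)_{i∈I}, J). Let η̄ ∈ P(V) disintegrate with respect to (A_i)_{i∈I} and λ via a Markov kernel κ, and assume the map a ↦ J(a, η̄) is Borel measurable, integrable with respect to η̄, and such that i ↦ ∫ J(a,η̄) dκ_i(a) is λ-integrable. Let Ψ be an admissible profile such that for λ-a.e. i, Ψ(i) minimizes a ↦ J(a, η̄) over A_i, and assume J(·,η̄) is integrable with respect to Ψ♯λ. Then ∫ J(a, η̄) dη̄(a) ≥ ∫ J(a, η̄) d(Ψ♯λ)(a). -/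
/-!
Disintegrating `η̄ = κ ∘ₘ λ` turns `∫ J(·, η̄) dη̄` into `∫ (∫ J(·, η̄) dκᵢ) dλ(i)`,
while `∫ J(·, η̄) d(Ψ♯λ) = ∫ J(Ψ i, η̄) dλ(i)`. Since `κᵢ` is concentrated on `Aᵢ`
and `Ψ i` minimizes `J(·, η̄)` there, `J(Ψ i, η̄) ≤ ∫ J(·, η̄) dκᵢ` for almost
every `i`; integrate over `λ`.
-/

open MeasureTheory ProbabilityTheory

namespace MeasureTheory.Measure

variable {α β E : Type*} {mα : MeasurableSpace α} {mβ : MeasurableSpace β}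
  [NormedAddCommGroup E] [NormedSpace ℝ E] {μ : Measure α} {κ : Kernel α β} {f : β → E}

lemma integrable_integral_of_integrable_comp (hf : Integrable f (κ ∘ₘ μ)) :
    Integrable (fun x ↦ ∫ y, f y ∂κ x) μ := by
  rw [comp_eq_comp_const_apply] at hf
  simpa using hf.integral_comp

lemma integral_comp [SFinite μ] [IsSFiniteKernel κ] (hf : Integrable f (κ ∘ₘ μ)) :
    ∫ y, f y ∂(κ ∘ₘ μ) = ∫ x, ∫ y, f y ∂κ x ∂μ := by
  rw [comp_eq_comp_const_apply] at hf ⊢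
  simpa using Kernel.integral_comp hf

end MeasureTheory.Measure

/-- `A` need not be measurable: `ν A = 1` only bounds the outer measure, which is enough
to give the null-measurable superset `{c ≤ g}` full measure. -/
lemma le_integral_of_forall_mem_le_of_measure_eq_one {β : Type*} {mβ : MeasurableSpace β}
    {ν : Measure β} [IsProbabilityMeasure ν] {A : Set β} (hA : ν A = 1) {g : β → ℝ}
    (hg : Integrable g ν) {c : ℝ} (hc : ∀ b ∈ A, c ≤ g b) : c ≤ ∫ b, g b ∂ν := by
  have hfull : ν {b | c ≤ g b} = 1 := le_antisymm prob_le_one (hA ▸ measure_mono hc)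
  have hae : ∀ᵐ b ∂ν, c ≤ g b :=
    (mem_ae_iff_prob_eq_one₀ (nullMeasurableSet_le aemeasurable_const hg.aemeasurable)).2 hfull
  calc c = ∫ _, c ∂ν := by simp
    _ ≤ ∫ b, g b ∂ν := integral_mono_ae (integrable_const c) hg hae

lemma integral_map_le_integral_comp_of_ae_forall_mem_le {I V : Type*} {mI : MeasurableSpace I}
    {mV : MeasurableSpace V} {μ : Measure I} [SFinite μ] {κ : Kernel I V} [IsMarkovKernel κ]
    {A : I → Set V} (hκA : ∀ᵐ i ∂μ, κ i (A i) = 1) {f : V → ℝ} (hf : Integrable f (κ ∘ₘ μ))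
    {Ψ : I → V} (hΨ : Measurable Ψ) (hfΨ : Integrable f (μ.map Ψ))
    (hmin : ∀ᵐ i ∂μ, ∀ b ∈ A i, f (Ψ i) ≤ f b) :
    ∫ a, f a ∂(μ.map Ψ) ≤ ∫ a, f a ∂(κ ∘ₘ μ) := by
  rw [integral_map hΨ.aemeasurable hfΨ.aestronglyMeasurable, Measure.integral_comp hf]
  refine integral_mono_ae (hfΨ.comp_measurable hΨ)
    (Measure.integrable_integral_of_integrable_comp hf) ?_
  filter_upwards [hκA, hmin, Measure.ae_integrable_of_integrable_comp hf]
    with i hκi hmini hfi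
  exact le_integral_of_forall_mem_le_of_measure_eq_one hκi hfi hmini

theorem disintegration_best_response_integral_le_general
    {I V : Type*} [MeasurableSpace I] [MeasurableSpace V]
    (lam : Measure I) [IsProbabilityMeasure lam]
    (A : I → Set V)
    (J : V → Measure V → ℝ)
    (ηb : Measure V)
    (κ : ProbabilityTheory.Kernel I V) [ProbabilityTheory.IsMarkovKernel κ]
    (hκA : ∀ᵐ i ∂lam, κ i (A i) = 1)
    (hdis : ηb = lam.bind (fun i => κ i))
    (hJint : Integrable (fun a => J a ηb) ηb)
    (Ψ : I → V) (hΨmeas : Measurable Ψ)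
    (hΨ : ∀ᵐ i ∂lam, Ψ i ∈ A i ∧ ∀ b ∈ A i, J (Ψ i) ηb ≤ J b ηb)
    (hJintmap : Integrable (fun a => J a ηb) (Measure.map Ψ lam)) :
    ∫ a, J a ηb ∂ηb ≥ ∫ a, J a ηb ∂(Measure.map Ψ lam) := by
  -- `set` keeps the rewrite below from touching the `ηb` inside `J a ηb`.
  set f : V → ℝ := fun a => J a ηb
  rw [hdis] at hJint ⊢
  exact integral_map_le_integral_comp_of_ae_forall_mem_le hκA hJint hΨmeas hJintmap
    (hΨ.mono fun _ h => h.2)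

/-- If `η̄` disintegrates over the action sets via a Markov kernel `κ`, and `Ψ` is an
admissible profile which best-responds to `η̄` almost everywhere, then
`∫ J(a,η̄) dη̄ ≥ ∫ J(a,η̄) d(Ψ♯λ)`. -/
theorem disintegration_best_response_integral_le
    {I V : Type*} [MeasurableSpace I] [MetricSpace V] [MeasurableSpace V] [BorelSpace V]
    (lam : Measure I) [IsProbabilityMeasure lam]
    (A : I → Set V) (hA : ∀ i, (A i).Nonempty)
    (J : V → Measure V → ℝ)
    (ηb : Measure V) [IsProbabilityMeasure ηb]
    (κ : ProbabilityTheory.Kernel I V) [ProbabilityTheory.IsMarkovKernel κ]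
    (hκA : ∀ᵐ i ∂lam, κ i (A i) = 1)
    (hdis : ηb = lam.bind (fun i => κ i))
    (hJmeas : Measurable (fun a => J a ηb))
    (hJint : Integrable (fun a => J a ηb) ηb)
    (hJintκ : Integrable (fun i => ∫ a, J a ηb ∂(κ i)) lam)
    (Ψ : I → V) (hΨmeas : Measurable Ψ)
    (hΨ : ∀ᵐ i ∂lam, Ψ i ∈ A i ∧ ∀ b ∈ A i, J (Ψ i) ηb ≤ J b ηb)
    (hJintmap : Integrable (fun a => J a ηb) (Measure.map Ψ lam)) :
    ∫ a, J a ηb ∂ηb ≥ ∫ a, J a ηb ∂(Measure.map Ψ lam) :=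
  disintegration_best_response_integral_le_general lam A J ηb κ hκA hdis hJint Ψ hΨmeas hΨ hJintmap
end

section
/- Let I and V be metric spaces and let A : I → Set V be a correspondence such that: (a) each A(i) is nonempty and compact; (b) A is upper semicontinuous, i.e. the graph {(i,a) ∈ I × V : a ∈ A(i)} is closed in I × V; (c) A is lower semicontinuous, i.e. for every open U ⊆ V the set {i ∈ I : A(i) ∩ U ≠ ∅} is open; and (d) the image of any compact subset of I is contained in a compact subset of V. Let J : V → ℝ be lower semicontinuous, suppose the function i ↦ min_{a ∈ A(i)} J(a) is continuous on I, and suppose that for every i ∈ I there is exactly one point b(i) ∈ A(i) minimizing J over A(i). Then the selection map b : I → V is continuous. -/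
/-!
Along a sequence `x n → i` the points `b (x n)` stay in one compact set, so it suffices that
every cluster point `v` of `b (x n)` equals `b i`. Closedness of the graph puts `v` in `A i`, and
lower semicontinuity of `J` together with `J (b (x n)) = min_{A (x n)} J → min_{A i} J` gives
`J v ≤ min_{A i} J`; hence `v` is the unique minimizer `b i`.
-/

open Filter Topology Set

theorem Filter.Tendsto.mapClusterPt_prodMk {α X Y : Type*} [TopologicalSpace X]
    [TopologicalSpace Y] {l : Filter α} {x : α → X} {f : α → Y} {i : X} {v : Y}
    (hx : Tendsto x l (𝓝 i)) (hf : MapClusterPt v l f) :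
    MapClusterPt (i, v) l fun n => (x n, f n) := by
  rw [mapClusterPt_iff_frequently]
  intro s hs
  obtain ⟨U, hU, W, hW, hUW⟩ := mem_nhds_prod_iff.1 hs
  exact ((hf.frequently hW).and_eventually (hx hU)).mono fun n h => hUW ⟨h.2, h.1⟩

theorem LowerSemicontinuousAt.le_of_mapClusterPt {α Y β : Type*} [TopologicalSpace Y]
    [LinearOrder β] [DenselyOrdered β] [TopologicalSpace β] [OrderTopology β]
    {l : Filter α} {f : α → Y} {J : Y → β} {v : Y} {c : β}
    (hJ : LowerSemicontinuousAt J v) (hf : MapClusterPt v l f)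
    (hc : Tendsto (fun n => J (f n)) l (𝓝 c)) : J v ≤ c := by
  by_contra! hlt
  obtain ⟨y, hcy, hyv⟩ := exists_between hlt
  obtain ⟨n, hyJ, hJy⟩ :=
    ((hf.frequently (hJ y hyv)).and_eventually (hc (Iio_mem_nhds hcy))).exists
  exact lt_asymm hyJ hJy

theorem eq_of_mapClusterPt_of_isClosed_graph {α I V β : Type*} [TopologicalSpace I]
    [TopologicalSpace V] [LinearOrder β] [DenselyOrdered β] [TopologicalSpace β]
    [OrderTopology β]
    {A : I → Set V} (hA : IsClosed {p : I × V | p.2 ∈ A p.1})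
    {J : V → β} (hJ : LowerSemicontinuous J) {b : I → V}
    (hb : ∀ i, b i ∈ A i ∧ ∀ a ∈ A i, J (b i) ≤ J a)
    (huniq : ∀ i, ∀ a ∈ A i, (∀ a' ∈ A i, J a ≤ J a') → a = b i)
    {l : Filter α} {x : α → I} {i : I} (hx : Tendsto x l (𝓝 i))
    (hJb : ContinuousAt (fun j => J (b j)) i) {v : V} (hv : MapClusterPt v l (b ∘ x)) :
    v = b i := by
  have hvA : v ∈ A i :=
    hA.mem_of_mapClusterPt (hx.mapClusterPt_prodMk hv) (Eventually.of_forall fun n => (hb _).1)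
  have hJv : J v ≤ J (b i) :=
    (hJ.lowerSemicontinuousAt v).le_of_mapClusterPt hv (hJb.tendsto.comp hx)
  exact huniq i v hvA fun a ha => hJv.trans ((hb i).2 a ha)

theorem best_response_selection_continuous_general
    {I V : Type*} [MetricSpace I] [MetricSpace V]
    (A : I → Set V)
    (husc : IsClosed {p : I × V | p.2 ∈ A p.1})
    (himg : ∀ K : Set I, IsCompact K → ∃ K' : Set V, IsCompact K' ∧ (⋃ i ∈ K, A i) ⊆ K')
    (J : V → ℝ) (hJ : LowerSemicontinuous J)
    (hMin : Continuous fun i => sInf (J '' A i))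
    (b : I → V)
    (hb : ∀ i, b i ∈ A i ∧ ∀ a ∈ A i, J (b i) ≤ J a)
    (huniq : ∀ i, ∀ a ∈ A i, (∀ a' ∈ A i, J a ≤ J a') → a = b i) :
    Continuous b := by
  have hJb : Continuous fun i => J (b i) := by
    convert hMin using 2 with i
    exact (IsLeast.csInf_eq ⟨mem_image_of_mem J (hb i).1, forall_mem_image.2 (hb i).2⟩).symm
  rw [continuous_iff_seqContinuous]
  intro x i hx
  obtain ⟨K, hK, hbK⟩ := himg _ hx.isCompact_insert_range
  refine hK.tendsto_nhds_of_unique_mapClusterPt (Eventually.of_forall fun n => ?_)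
    fun v _ hv => eq_of_mapClusterPt_of_isClosed_graph husc hJ hb huniq hx hJb.continuousAt hv
  exact hbK (mem_biUnion (mem_insert_of_mem _ (mem_range_self n)) (hb _).1)

/-- Continuity of the (unique) best-response selection: if the correspondence `A` is
continuous with nonempty compact values, maps compacts into compacts, `J` is lower
semicontinuous, the minimum-value function is continuous, and each `A i` has exactly one
minimizer `b i` of `J`, then the selection `b` is continuous. -/
theorem best_response_selection_continuous
    {I V : Type*} [MetricSpace I] [MetricSpace V]
    (A : I → Set V)
    (hne : ∀ i, (A i).Nonempty)
    (hcpt : ∀ i, IsCompact (A i))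
    (husc : IsClosed {p : I × V | p.2 ∈ A p.1})
    (hlsc : ∀ U : Set V, IsOpen U → IsOpen {i : I | (A i ∩ U).Nonempty})
    (himg : ∀ K : Set I, IsCompact K → ∃ K' : Set V, IsCompact K' ∧ (⋃ i ∈ K, A i) ⊆ K')
    (J : V → ℝ) (hJ : LowerSemicontinuous J)
    (hMin : Continuous fun i => sInf (J '' A i))
    (b : I → V)
    (hb : ∀ i, b i ∈ A i ∧ ∀ a ∈ A i, J (b i) ≤ J a)
    (huniq : ∀ i, ∀ a ∈ A i, (∀ a' ∈ A i, J a ≤ J a') → a = b i) :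
    Continuous b :=
  best_response_selection_continuous_general A husc himg J hJ hMin b hb huniq
end

section
/- Let I and V be Polish spaces with their Borel σ-algebras, λ a Borel probability measure on I, and A : I → Set V a correspondence whose graph {(i,a) ∈ I × V : a ∈ A(i)} is closed in I × V (so each A(i) is closed). Let (η_n)_{n∈ℕ} be Borel probability measures on V converging weakly to a Borel probability measure η, and suppose each η_n disintegrates with respect to (A_i)_{i∈I} and λ, i.e. there are Markov kernels κ_n from I to V with κ_n(i)(A(i)) = 1 for λ-a.e. i and η_n = λ.bind κ_n. Then η also disintegrates with respect to (A_i)_{i∈I} and λ: there exists a Markov kernel κ from I to V with κ(i)(A(i)) = 1 for λ-a.e. i and η = λ.bind κ. -/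
/-! The couplings `λ ⊗ₘ κₙ` on `I × V` have first marginal `λ` and second marginals `ηₙ`. Both
families of marginals are tight (a weakly convergent sequence on a Polish space is), hence so are
the couplings, and by Prokhorov's theorem a subsequence converges weakly to some `ν`. Its marginals
are `λ` and `η`, and by the portmanteau theorem `ν` is still carried by the closed graph of `A`.
Disintegrating `ν` over its first marginal gives the required kernel. -/

open MeasureTheory ProbabilityTheory Filter Topology Set

namespace MeasureTheory

variable {X Y : Type*} [MeasurableSpace X] [TopologicalSpace X]

lemma isTightMeasureSet_range_of_tendsto [PolishSpace X] [BorelSpace X]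
    {μs : ℕ → ProbabilityMeasure X} {μ : ProbabilityMeasure X} (h : Tendsto μs atTop (𝓝 μ)) :
    IsTightMeasureSet (range fun n ↦ (μs n : Measure X)) := by
  let := TopologicalSpace.upgradeIsCompletelyMetrizable X
  have hcomp : IsCompact (closure (range μs)) :=
    h.isCompact_insert_range.closure_of_subset (subset_insert _ _)
  refine (isTightMeasureSet_of_isCompact_closure hcomp).subset ?_
  rintro _ ⟨n, rfl⟩
  exact ⟨μs n, mem_range_self n, rfl⟩

lemma exists_tendsto_subseq_of_isTightMeasureSet [TopologicalSpace.MetrizableSpace X]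
    [TopologicalSpace.SeparableSpace X] [BorelSpace X] {μs : ℕ → ProbabilityMeasure X}
    (h : IsTightMeasureSet (range fun n ↦ (μs n : Measure X))) :
    ∃ (μ : ProbabilityMeasure X) (φ : ℕ → ℕ), StrictMono φ ∧ Tendsto (μs ∘ φ) atTop (𝓝 μ) := by
  have hcomp : IsCompact (closure (range μs)) := by
    refine isCompact_closure_of_isTightMeasureSet (h.subset ?_)
    rintro _ ⟨_, ⟨n, rfl⟩, rfl⟩
    exact mem_range_self n
  obtain ⟨μ, -, φ, hφ, hlim⟩ := hcomp.tendsto_subseq fun n ↦ subset_closure (mem_range_self n)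
  exact ⟨μ, φ, hφ, hlim⟩

namespace ProbabilityMeasure

lemma map_eq_of_tendsto [OpensMeasurableSpace X] [MeasurableSpace Y] [TopologicalSpace Y]
    [BorelSpace Y] [HasOuterApproxClosed Y] {ι : Type*} {L : Filter ι} [L.NeBot]
    {μs : ι → ProbabilityMeasure X} {μ : ProbabilityMeasure X} (hμ : Tendsto μs L (𝓝 μ))
    {ρs : ι → ProbabilityMeasure Y} {ρ : ProbabilityMeasure Y} (hρ : Tendsto ρs L (𝓝 ρ))
    {f : X → Y} (hf : Continuous f) (h : ∀ i, (μs i : Measure X).map f = ρs i) :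
    (μ : Measure X).map f = ρ := by
  have hmap := tendsto_map_of_tendsto_of_continuous μs μ hμ hf
  have hρ' : Tendsto (fun i ↦ (μs i).map hf.measurable.aemeasurable) L (𝓝 ρ) :=
    hρ.congr fun i ↦ toMeasure_injective (by simp [h i])
  simpa using congrArg toMeasure (tendsto_nhds_unique hmap hρ')

lemma ae_mem_of_tendsto [OpensMeasurableSpace X] [HasOuterApproxClosed X]
    {ι : Type*} {L : Filter ι} [L.NeBot]
    {μs : ι → ProbabilityMeasure X} {μ : ProbabilityMeasure X} (hμ : Tendsto μs L (𝓝 μ))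
    {F : Set X} (hF : IsClosed F) (h : ∀ i, ∀ᵐ x ∂(μs i : Measure X), x ∈ F) :
    ∀ᵐ x ∂(μ : Measure X), x ∈ F := by
  have hFm := hF.measurableSet
  refine (mem_ae_iff_prob_eq_one hFm).2 (le_antisymm prob_le_one ?_)
  calc (1 : ENNReal) = L.limsup fun i ↦ (μs i : Measure X) F := by
        simp only [(mem_ae_iff_prob_eq_one hFm).1 (h _), limsup_const]
    _ ≤ (μ : Measure X) F := limsup_measure_closed_le_of_tendsto hμ hF

end ProbabilityMeasure

namespace Measure

variable {α β : Type*} [MeasurableSpace α] [MeasurableSpace β]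

lemma ae_compProd_mem_iff {μ : Measure α} [SFinite μ] {κ : Kernel α β} [IsMarkovKernel κ]
    {A : α → Set β} (hA : MeasurableSet {p : α × β | p.2 ∈ A p.1}) :
    (∀ᵐ p ∂(μ ⊗ₘ κ), p.2 ∈ A p.1) ↔ ∀ᵐ a ∂μ, κ a (A a) = 1 := by
  rw [ae_compProd_iff hA]
  exact eventually_congr <| .of_forall fun a ↦
    mem_ae_iff_prob_eq_one (hA.preimage measurable_prodMk_left)

lemma condKernel_comp_fst_eq_snd [StandardBorelSpace β] [Nonempty β] (ρ : Measure (α × β))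
    [IsFiniteMeasure ρ] : ρ.condKernel ∘ₘ ρ.fst = ρ.snd := by
  conv_rhs => rw [← ρ.disintegrate ρ.condKernel]
  exact (snd_compProd _ _).symm

lemma exists_isMarkovKernel_ae_mem_of_ae_mem [StandardBorelSpace β] [Nonempty β]
    {ρ : Measure (α × β)} [IsProbabilityMeasure ρ] {A : α → Set β}
    (hA : MeasurableSet {p : α × β | p.2 ∈ A p.1}) (hρA : ∀ᵐ p ∂ρ, p.2 ∈ A p.1) :
    ∃ κ : Kernel α β, IsMarkovKernel κ ∧ (∀ᵐ a ∂ρ.fst, κ a (A a) = 1) ∧ ρ.snd = κ ∘ₘ ρ.fst := by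
  refine ⟨ρ.condKernel, inferInstance, ?_, ρ.condKernel_comp_fst_eq_snd.symm⟩
  rw [← ae_compProd_mem_iff hA, ρ.disintegrate ρ.condKernel]
  exact hρA

end Measure

end MeasureTheory

/-- Stability of disintegration under weak limits: if each `η_n` disintegrates over the
closed-graph correspondence `(A_i)` via a Markov kernel, and `η_n → η` weakly, then `η`
also disintegrates over `(A_i)`. -/
theorem disintegration_stable_under_weak_limit
    {I V : Type*}
    [TopologicalSpace I] [PolishSpace I] [MeasurableSpace I] [BorelSpace I]
    [TopologicalSpace V] [PolishSpace V] [MeasurableSpace V] [BorelSpace V]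
    (lam : Measure I) [IsProbabilityMeasure lam]
    (A : I → Set V)
    (hgraph : IsClosed {p : I × V | p.2 ∈ A p.1})
    (ηs : ℕ → Measure V) [∀ n, IsProbabilityMeasure (ηs n)]
    (η : Measure V) [IsProbabilityMeasure η]
    (κs : ℕ → ProbabilityTheory.Kernel I V) [∀ n, ProbabilityTheory.IsMarkovKernel (κs n)]
    (hκA : ∀ n, ∀ᵐ i ∂lam, (κs n) i (A i) = 1)
    (hbind : ∀ n, ηs n = lam.bind (fun i => (κs n) i))
    (hweak : ∀ f : BoundedContinuousFunction V ℝ,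
      Filter.Tendsto (fun n => ∫ a, f a ∂(ηs n)) Filter.atTop (nhds (∫ a, f a ∂η))) :
    ∃ κ : ProbabilityTheory.Kernel I V, ProbabilityTheory.IsMarkovKernel κ ∧
      (∀ᵐ i ∂lam, κ i (A i) = 1) ∧ η = lam.bind (fun i => κ i) := by
  have := nonempty_of_isProbabilityMeasure η
  let μs n : ProbabilityMeasure (I × V) := ⟨lam ⊗ₘ κs n, inferInstance⟩
  let ηsP n : ProbabilityMeasure V := ⟨ηs n, inferInstance⟩
  let ηP : ProbabilityMeasure V := ⟨η, inferInstance⟩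
  let lamP : ProbabilityMeasure I := ⟨lam, inferInstance⟩
  have hfst n : (μs n : Measure (I × V)).fst = lam := Measure.fst_compProd lam (κs n)
  have hsnd n : (μs n : Measure (I × V)).snd = ηs n := hbind n ▸ Measure.snd_compProd lam (κs n)
  have hη : Tendsto ηsP atTop (𝓝 ηP) :=
    ProbabilityMeasure.tendsto_iff_forall_integral_tendsto.2 hweak
  have htight : IsTightMeasureSet (range fun n ↦ (μs n : Measure (I × V))) := by
    refine .prodMk ?_ ?_ <;> rw [← range_comp]
    · exact isTightMeasureSet_singleton.subset (range_subset_singleton.2 (funext hfst))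
    · exact (isTightMeasureSet_range_of_tendsto hη).subset
        (range_subset_iff.2 fun n ↦ ⟨n, (hsnd n).symm⟩)
  obtain ⟨ν, φ, hφ, hν⟩ := exists_tendsto_subseq_of_isTightMeasureSet htight
  have hνfst : (ν : Measure (I × V)).fst = lam :=
    ProbabilityMeasure.map_eq_of_tendsto hν (tendsto_const_nhds (x := lamP)) continuous_fst
      fun n ↦ hfst (φ n)
  have hνsnd : (ν : Measure (I × V)).snd = η :=
    ProbabilityMeasure.map_eq_of_tendsto hν (hη.comp hφ.tendsto_atTop) continuous_snd
      fun n ↦ hsnd (φ n)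
  have hνA : ∀ᵐ p ∂(ν : Measure (I × V)), p.2 ∈ A p.1 :=
    ProbabilityMeasure.ae_mem_of_tendsto hν hgraph fun n ↦
      (Measure.ae_compProd_mem_iff hgraph.measurableSet).2 (hκA (φ n))
  obtain ⟨κ, hκ, hκA', hκη⟩ :=
    Measure.exists_isMarkovKernel_ae_mem_of_ae_mem hgraph.measurableSet hνA
  subst hνfst hνsnd
  exact ⟨κ, hκ, hκA', hκη⟩
end

section
/- Let W be a real normed vector space with its Borel σ-algebra, I a measurable space with a probability measure λ, and (A_i)_{i∈I} a family of nonempty subsets of W. Let J : W × P(W) → ℝ be a cost function and let S be the set of action distributions of admissible profiles; assume J(·,θ) is Borel measurable for every θ ∈ S. Suppose J is monotone on S. Let Ψ̃ be a Nash equilibrium with η̃ = Ψ̃♯λ, and let Ψ be an admissible profile with η = Ψ♯λ. For λ-a.e. i, let y_i be a continuous linear functional on W satisfying the subgradient inequality J(b, η) − J(Ψ(i), η) ≥ y_i(b − Ψ(i)) for all b ∈ W, and assume i ↦ y_i(Ψ(i) − Ψ̃(i)) is λ-integrable and J(·,η), J(·,η̃) are integrable with respect to both η and η̃. Then ∫_I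 y_i(Ψ(i) − Ψ̃(i)) dλ(i) ≥ ∫ J(a, η̃) d(η − η̃)(a) ≥ 0, where ∫ φ d(η − η̃) denotes ∫ φ dη − ∫ φ dη̃. -/
open MeasureTheory

/-- Subgradient step of the OMD convergence proof: in a monotone anonymous game on a
normed action space, if `Ψ̃` is a Nash equilibrium and `y_i` is a subgradient of
`J(·,η)` at `Ψ(i)`, then `∫ y_i(Ψ(i) − Ψ̃(i)) dλ(i) ≥ ∫ J(a,η̃) d(η − η̃) ≥ 0`. -/
theorem omd_subgradient_inequality
    {I W : Type*} [MeasurableSpace I]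
    [NormedAddCommGroup W] [NormedSpace ℝ W] [MeasurableSpace W] [BorelSpace W]
    (lam : Measure I) [IsProbabilityMeasure lam]
    (A : I → Set W) (hA : ∀ i, (A i).Nonempty)
    (J : W → Measure W → ℝ)
    -- the set of action distributions of admissible profiles
    (S : Set (Measure W))
    (hS : S = {θ | ∃ Φ : I → W, Measurable Φ ∧ (∀ᵐ i ∂lam, Φ i ∈ A i) ∧
      θ = Measure.map Φ lam})
    -- Borel measurability of the cost
    (hJmeas : ∀ θ ∈ S, Measurable (fun a => J a θ))
    -- monotonicity of the cost on S (including the integrability requirements)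
    (hmono : ∀ θ ∈ S, ∀ θ' ∈ S,
      Integrable (fun a => J a θ) θ ∧ Integrable (fun a => J a θ) θ' ∧
      Integrable (fun a => J a θ') θ ∧ Integrable (fun a => J a θ') θ' ∧
      0 ≤ (∫ a, J a θ ∂θ - ∫ a, J a θ ∂θ') - (∫ a, J a θ' ∂θ - ∫ a, J a θ' ∂θ'))
    -- Ψ̃ is a Nash equilibrium with distribution η̃
    (Ψt : I → W) (hΨtmeas : Measurable Ψt)
    (hΨt : ∀ᵐ i ∂lam, Ψt i ∈ A i ∧
      ∀ b ∈ A i, J (Ψt i) (Measure.map Ψt lam) ≤ J b (Measure.map Ψt lam))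
    -- Ψ is an admissible profile with distribution η
    (Ψ : I → W) (hΨmeas : Measurable Ψ) (hΨ : ∀ᵐ i ∂lam, Ψ i ∈ A i)
    (η ηt : Measure W) (hη : η = Measure.map Ψ lam) (hηt : ηt = Measure.map Ψt lam)
    -- y_i is a subgradient of `J(·,η)` at `Ψ(i)`
    (y : I → (W →L[ℝ] ℝ))
    (hsub : ∀ᵐ i ∂lam, ∀ b : W, J b η - J (Ψ i) η ≥ (y i) (b - Ψ i))
    (hyint : Integrable (fun i => (y i) (Ψ i - Ψt i)) lam)
    -- integrability of the costs
    (hint : Integrable (fun a => J a η) η ∧ Integrable (fun a => J a η) ηt ∧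
      Integrable (fun a => J a ηt) η ∧ Integrable (fun a => J a ηt) ηt) :
    (∫ i, (y i) (Ψ i - Ψt i) ∂lam ≥ ∫ a, J a ηt ∂η - ∫ a, J a ηt ∂ηt) ∧
      (∫ a, J a ηt ∂η - ∫ a, J a ηt ∂ηt ≥ 0) := by
  obtain ⟨h1, h2, h3, h4⟩ := hint
  have hηS : η ∈ S := by
    rw [hS]; exact ⟨Ψ, hΨmeas, hΨ, hη⟩
  have hηtS : ηt ∈ S := by
    rw [hS]; exact ⟨Ψt, hΨtmeas, hΨt.mono fun i h => h.1, hηt⟩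
  have hJη := hJmeas η hηS
  have hJηt := hJmeas ηt hηtS
  -- change of variables
  have cη : ∀ (f : W → ℝ), Measurable f → ∫ a, f a ∂η = ∫ i, f (Ψ i) ∂lam := by
    intro f hf
    rw [hη, integral_map hΨmeas.aemeasurable hf.aestronglyMeasurable]
  have cηt : ∀ (f : W → ℝ), Measurable f → ∫ a, f a ∂ηt = ∫ i, f (Ψt i) ∂lam := by
    intro f hf
    rw [hηt, integral_map hΨtmeas.aemeasurable hf.aestronglyMeasurable]
  have iη : ∀ (f : W → ℝ), Measurable f → Integrable f η →
      Integrable (fun i => f (Ψ i)) lam := by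
    intro f hf hfi
    rw [hη, integrable_map_measure hf.aestronglyMeasurable hΨmeas.aemeasurable] at hfi
    exact hfi
  have iηt : ∀ (f : W → ℝ), Measurable f → Integrable f ηt →
      Integrable (fun i => f (Ψt i)) lam := by
    intro f hf hfi
    rw [hηt, integrable_map_measure hf.aestronglyMeasurable hΨtmeas.aemeasurable] at hfi
    exact hfi
  have intΨηt : Integrable (fun i => J (Ψ i) ηt) lam := iη _ hJηt h3
  have intΨtηt : Integrable (fun i => J (Ψt i) ηt) lam := iηt _ hJηt h4
  have intΨη : Integrable (fun i => J (Ψ i) η) lam := iη _ hJη h1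
  have intΨtη : Integrable (fun i => J (Ψt i) η) lam := iηt _ hJη h2
  have second : ∫ a, J a ηt ∂η - ∫ a, J a ηt ∂ηt ≥ 0 := by
    rw [cη _ hJηt, cηt _ hJηt, ← integral_sub intΨηt intΨtηt]
    apply integral_nonneg_of_ae
    filter_upwards [hΨt, hΨ] with i hi hΨi
    have := hi.2 (Ψ i) hΨi
    rw [← hηt] at this
    simp only [Pi.zero_apply, Pi.sub_apply]
    linarith
  refine ⟨?_, second⟩
  have step1 : ∫ i, (y i) (Ψ i - Ψt i) ∂lam ≥ ∫ i, (J (Ψ i) η - J (Ψt i) η) ∂lam := by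
    apply integral_mono_ae (intΨη.sub intΨtη) hyint
    filter_upwards [hsub] with i hi
    have := hi (Ψt i)
    have heq : (y i) (Ψ i - Ψt i) = -((y i) (Ψt i - Ψ i)) := by
      rw [← map_neg]; congr 1; abel
    simp only [Pi.sub_apply]
    rw [heq]; linarith
  have step2 := (hmono η hηS ηt hηtS).2.2.2.2
  rw [integral_sub intΨη intΨtη, ← cη _ hJη, ← cηt _ hJη] at step1
  linarith
end
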